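/- arXiv:2004.06834 — 3 statements merged into one kernel-verified Lean document; each statement's English description precedes it below -/
import Mathlib

section
/- Every binary symplectic matrix F ∈ Sp(2n, F₂) can be expressed as a product F = L_{Q₁} · Ω · T_{R₁} · G_k · T_{R₂} · L_{Q₂}, where 0 ≤ k ≤ n is an integer, Q₁, Q₂ ∈ GL(n, F₂) are invertible, R₁, R₂ ∈ F₂^{n×n} are symmetric, L_Q denotes the block matrix [[Q, 0],[0, Q^{−T}]] (with Q^{−T} the transpose of the inverse of Q), T_R denotes the block matrix [[Iₙ, R],[0, Iₙ]], Ω = [[0, Iₙ],[Iₙ, 0]], and G_k = [[L_{n−k}, U_k],[U_k, L_{n−k}]] with U_k = diag(I_k, 0_{n−k}) and L_{n−k} = diag(0_k, I_{n−k}), all matrices over F₂. -/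
open Matrix

noncomputable section

/-- The symplectic form `Ω = [[0, I],[I, 0]]` over `F₂`. -/
def OmegaMat (n : ℕ) : Matrix (Fin n ⊕ Fin n) (Fin n ⊕ Fin n) (ZMod 2) :=
  Matrix.fromBlocks 0 1 1 0

/-- The elementary symplectic matrix `L_Q = [[Q, 0],[0, Q^{-T}]]`. -/
def LQ {n : ℕ} (Q : Matrix (Fin n) (Fin n) (ZMod 2)) :
    Matrix (Fin n ⊕ Fin n) (Fin n ⊕ Fin n) (ZMod 2) :=
  Matrix.fromBlocks Q 0 0 (Q⁻¹)ᵀ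

/-- The elementary symplectic matrix `T_R = [[I, R],[0, I]]`. -/
def TR {n : ℕ} (R : Matrix (Fin n) (Fin n) (ZMod 2)) :
    Matrix (Fin n ⊕ Fin n) (Fin n ⊕ Fin n) (ZMod 2) :=
  Matrix.fromBlocks 1 R 0 1

/-- `U_k = diag(I_k, 0_{n-k})`. -/
def Uk (n k : ℕ) : Matrix (Fin n) (Fin n) (ZMod 2) :=
  Matrix.diagonal fun i => if (i : ℕ) < k then 1 else 0

/-- `L_{n-k} = diag(0_k, I_{n-k})`. -/
def Lnk (n k : ℕ) : Matrix (Fin n) (Fin n) (ZMod 2) :=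
  Matrix.diagonal fun i => if (i : ℕ) < k then 0 else 1

/-- The elementary symplectic matrix `G_k = [[L_{n-k}, U_k],[U_k, L_{n-k}]]`. -/
def Gk (n k : ℕ) : Matrix (Fin n ⊕ Fin n) (Fin n ⊕ Fin n) (ZMod 2) :=
  Matrix.fromBlocks (Lnk n k) (Uk n k) (Uk n k) (Lnk n k)

/-!
Write `F = [[A, B], [C, D]]`. The rank normal form `V A W = U_k` lets us replace `F` by
`L_V F L_W` and assume `A = U_k`. The symplectic relations make `U_k C` symmetric, and since `F`
is invertible, `U_k` and `C` have no common kernel; hence `T = U_k + L_{n-k} C` is invertible and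
`C = (L_{n-k} + R U_k) T` with `R = U_k C` symmetric. Thus `Ω T_R G_k L_T` is a symplectic matrix
with the same first block column `(U_k; C)` as `F`. Two symplectic matrices with the same first
block column differ by a right factor `T_S` with `S` symmetric, and `L_T T_S = T_{T S Tᵀ} L_T`.
-/

section RankNormalForm

variable {K : Type*} [Field K] {n : ℕ}

theorem exists_rank_normal_form_diagonal (A : Matrix (Fin n) (Fin n) K) :
    ∃ k ≤ n, ∃ V W : Matrix (Fin n) (Fin n) K, IsUnit V ∧ IsUnit W ∧
      V * A * W = diagonal fun i : Fin n => if (i : ℕ) < k then 1 else 0 := by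
  obtain ⟨V, W, e, hV, hW, hVAW⟩ := exists_rank_normal_form A
  have hcard : n = A.rank + (Fintype.card (Fin n) - A.rank) := by
    have := A.rank_le_width; simp only [Fintype.card_fin]; omega
  let e₀ : Fin n ≃ Fin A.rank ⊕ Fin (Fintype.card (Fin n) - A.rank) :=
    (finCongr hcard).trans finSumFinEquiv.symm
  -- `τ` moves the identity block of `exists_rank_normal_form` to the first `A.rank` indices.
  let τ : Equiv.Perm (Fin n) := e₀.trans e.symm
  have hτ (σ : Equiv.Perm (Fin n)) : IsUnit (σ.toPEquiv.toMatrix : Matrix _ _ K) := by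
    rw [isUnit_iff_isUnit_det, det_permutation]
    exact (Equiv.Perm.sign σ).isUnit.map (Int.castRingHom K)
  refine ⟨A.rank, A.rank_le_width, τ.toPEquiv.toMatrix * V, W * τ.symm.toPEquiv.toMatrix,
    (hτ τ).mul hV, hW.mul (hτ _), ?_⟩
  rw [← diagonal_one, ← diagonal_zero, fromBlocks_diagonal, submatrix_diagonal_equiv] at hVAW
  rw [show τ.toPEquiv.toMatrix * V * A * (W * τ.symm.toPEquiv.toMatrix) =
      τ.toPEquiv.toMatrix * (V * A * W) * τ.symm.toPEquiv.toMatrix by simp only [Matrix.mul_assoc],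
    hVAW, PEquiv.toMatrix_toPEquiv_mul, PEquiv.mul_toMatrix_toPEquiv, Equiv.symm_symm,
    submatrix_submatrix, Function.id_comp, Function.comp_id, submatrix_diagonal_equiv]
  congr 1
  funext i
  simp only [τ, e₀, Function.comp_apply, Equiv.trans_apply, Equiv.apply_symm_apply, finCongr_apply]
  split_ifs with hi
  · rw [show Fin.cast hcard i = Fin.castAdd _ ⟨i, hi⟩ from rfl, finSumFinEquiv_symm_apply_castAdd]
    rfl
  · have hi' : (i : ℕ) - A.rank < Fintype.card (Fin n) - A.rank := by simp; omega
    rw [show Fin.cast hcard i = Fin.natAdd A.rank ⟨i - A.rank, hi'⟩ from Fin.ext (by simp; omega),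
      finSumFinEquiv_symm_apply_natAdd]
    rfl

end RankNormalForm

namespace SymplecticGroup

variable {l R : Type*} [Fintype l] [DecidableEq l] [CommRing R]
  {F : Matrix (l ⊕ l) (l ⊕ l) R}

theorem transpose_toBlocks₁₁_mul_toBlocks₂₁ (hF : F ∈ symplecticGroup l R) :
    F.toBlocks₁₁ᵀ * F.toBlocks₂₁ = F.toBlocks₂₁ᵀ * F.toBlocks₁₁ := by
  rw [← fromBlocks_toBlocks F, fromBlocks_mem_iff] at hF
  exact hF.1

theorem eq_zero_of_toBlocks₁₁_mulVec_eq_zero (hF : F ∈ symplecticGroup l R) {v : l → R}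
    (hA : F.toBlocks₁₁ *ᵥ v = 0) (hC : F.toBlocks₂₁ *ᵥ v = 0) : v = 0 := by
  have hinj := mulVec_injective_of_isUnit ((isUnit_iff_isUnit_det F).mpr (symplectic_det hF))
  have : F *ᵥ Sum.elim v 0 = F *ᵥ 0 := by
    conv_lhs => rw [← fromBlocks_toBlocks F]
    rw [fromBlocks_mulVec]
    simp [hA, hC]
  funext i
  exact congrFun (hinj this) (Sum.inl i)

end SymplecticGroup

section ComplementaryIdempotents

variable {ι K : Type*} [Fintype ι] [DecidableEq ι] [Field K] {P Q M : Matrix ι ι K}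

theorem exists_isUnit_eq_add_mul_mul_mul (hsum : P + Q = 1) (hPQ : P * Q = 0) (hQP : Q * P = 0)
    (hPM : P * M = Mᵀ * P) (hker : ∀ v, P *ᵥ v = 0 → M *ᵥ v = 0 → v = 0) :
    ∃ T, IsUnit T ∧ P * T = P ∧ M = (Q + P * M * P) * T := by
  have hPP : P * P = P := by rw [← add_zero (P * P), ← hPQ, ← mul_add, hsum, mul_one]
  have hQQ : Q * Q = Q := by rw [← zero_add (Q * Q), ← hPQ, ← add_mul, hsum, one_mul]
  have hPMQ : P * M * Q = 0 := by rw [hPM, Matrix.mul_assoc, hPQ, Matrix.mul_zero]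
  have hPMP : P * M * P = P * M := by
    rw [← add_zero (P * M * P), ← hPMQ, ← Matrix.mul_add, hsum, Matrix.mul_one]
  have hPT : P * (P + Q * M) = P := by
    rw [Matrix.mul_add, hPP, ← Matrix.mul_assoc, hPQ, Matrix.zero_mul, add_zero]
  refine ⟨P + Q * M, ?_, hPT, ?_⟩
  · refine mulVec_injective_iff_isUnit.mp fun v w hvw => sub_eq_zero.mp ?_
    set u := v - w
    have hTu : (P + Q * M) *ᵥ u = 0 := by rw [mulVec_sub, hvw, sub_self]
    have hPu : P *ᵥ u = 0 := by rw [← hPT, ← mulVec_mulVec, hTu, mulVec_zero]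
    have hQMu : (Q * M) *ᵥ u = 0 := by rwa [add_mulVec, hPu, zero_add] at hTu
    have hPMu : (P * M) *ᵥ u = 0 := by rw [← hPMP, ← mulVec_mulVec, hPu, mulVec_zero]
    refine hker u hPu ?_
    rw [← one_mulVec (M *ᵥ u), ← hsum, add_mulVec, mulVec_mulVec, mulVec_mulVec, hPMu, hQMu,
      add_zero]
  · rw [Matrix.add_mul, Matrix.mul_add, Matrix.mul_add, ← Matrix.mul_assoc, hQP, hQQ,
      Matrix.mul_assoc _ P, hPP, hPMP, ← Matrix.mul_assoc, hPMQ, Matrix.zero_mul, zero_add,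
      add_zero, ← Matrix.add_mul, add_comm Q, hsum, Matrix.one_mul]

end ComplementaryIdempotents

theorem Matrix.toCols₁_mul {m l n₁ n₂ R : Type*} [Fintype l] [NonUnitalNonAssocSemiring R]
    (M : Matrix m l R) (N : Matrix l (n₁ ⊕ n₂) R) : (M * N).toCols₁ = M * N.toCols₁ :=
  rfl

theorem Matrix.toCols₁_fromBlocks {m₁ m₂ n₁ n₂ R : Type*} (A : Matrix m₁ n₁ R)
    (B : Matrix m₁ n₂ R) (C : Matrix m₂ n₁ R) (D : Matrix m₂ n₂ R) :
    (fromBlocks A B C D).toCols₁ = fromRows A C := by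
  ext (i | i) j <;> rfl

section Binary

variable {n : ℕ}

theorem Uk_add_Lnk (n k : ℕ) : Uk n k + Lnk n k = 1 := by
  rw [Uk, Lnk, diagonal_add, ← diagonal_one]
  congr 1; funext i; split_ifs <;> decide

theorem Uk_mul_Lnk (n k : ℕ) : Uk n k * Lnk n k = 0 := by
  rw [Uk, Lnk, diagonal_mul_diagonal, ← diagonal_zero]
  congr 1; funext i; split_ifs <;> decide

theorem Lnk_mul_Uk (n k : ℕ) : Lnk n k * Uk n k = 0 := by
  rw [Uk, Lnk, diagonal_mul_diagonal, ← diagonal_zero]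
  congr 1; funext i; split_ifs <;> decide

theorem Uk_transpose (n k : ℕ) : (Uk n k)ᵀ = Uk n k := diagonal_transpose _

theorem Lnk_transpose (n k : ℕ) : (Lnk n k)ᵀ = Lnk n k := diagonal_transpose _

theorem OmegaMat_eq_J : OmegaMat n = J (Fin n) (ZMod 2) := by
  have hneg : (-1 : Matrix (Fin n) (Fin n) (ZMod 2)) = 1 := by
    ext i j
    exact CharTwo.neg_eq _
  rw [OmegaMat, J, hneg]

theorem mem_symplecticGroup_iff {F : Matrix (Fin n ⊕ Fin n) (Fin n ⊕ Fin n) (ZMod 2)} :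
    F ∈ symplecticGroup (Fin n) (ZMod 2) ↔ F * OmegaMat n * Fᵀ = OmegaMat n := by
  rw [OmegaMat_eq_J, SymplecticGroup.mem_iff]

theorem OmegaMat_mem_symplecticGroup : OmegaMat n ∈ symplecticGroup (Fin n) (ZMod 2) :=
  OmegaMat_eq_J ▸ SymplecticGroup.J_mem _ _

theorem LQ_mem_symplecticGroup {Q : Matrix (Fin n) (Fin n) (ZMod 2)} (hQ : IsUnit Q) :
    LQ Q ∈ symplecticGroup (Fin n) (ZMod 2) := by
  refine SymplecticGroup.fromBlocks_mem_iff.mpr ⟨by simp, by simp, ?_⟩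
  rw [transpose_zero, Matrix.zero_mul, sub_zero, ← transpose_mul,
    nonsing_inv_mul _ ((isUnit_iff_isUnit_det Q).mp hQ), transpose_one]

theorem TR_mem_symplecticGroup {R : Matrix (Fin n) (Fin n) (ZMod 2)} (hR : R.IsSymm) :
    TR R ∈ symplecticGroup (Fin n) (ZMod 2) :=
  SymplecticGroup.fromBlocks_mem_iff.mpr ⟨by simp, by simp [hR.eq], by simp⟩

theorem Gk_mem_symplecticGroup (k : ℕ) : Gk n k ∈ symplecticGroup (Fin n) (ZMod 2) := by
  refine SymplecticGroup.fromBlocks_mem_iff.mpr ?_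
  simp only [Uk_transpose, Lnk_transpose, Uk_mul_Lnk, Lnk_mul_Uk, true_and]
  rw [Uk, Lnk, diagonal_mul_diagonal, diagonal_mul_diagonal, diagonal_sub, ← diagonal_one]
  congr 1; funext i; split_ifs <;> decide

theorem LQ_one : LQ (1 : Matrix (Fin n) (Fin n) (ZMod 2)) = 1 := by
  rw [LQ, inv_one, transpose_one, fromBlocks_one]

theorem LQ_mul_LQ (A B : Matrix (Fin n) (Fin n) (ZMod 2)) : LQ A * LQ B = LQ (A * B) := by
  rw [LQ, LQ, LQ, fromBlocks_multiply, Matrix.mul_inv_rev, transpose_mul]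
  simp

theorem LQ_mul_TR {Q : Matrix (Fin n) (Fin n) (ZMod 2)} (hQ : IsUnit Q)
    (R : Matrix (Fin n) (Fin n) (ZMod 2)) : LQ Q * TR R = TR (Q * R * Qᵀ) * LQ Q := by
  have hQt : IsUnit Qᵀ.det := Q.isUnit_det_transpose ((isUnit_iff_isUnit_det Q).mp hQ)
  rw [LQ, TR, TR, fromBlocks_multiply, fromBlocks_multiply, transpose_nonsing_inv,
    Matrix.mul_nonsing_inv_cancel_right _ _ hQt]
  simp

theorem toBlocks₁₁_LQ_mul_mul_LQ (V W : Matrix (Fin n) (Fin n) (ZMod 2))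
    (F : Matrix (Fin n ⊕ Fin n) (Fin n ⊕ Fin n) (ZMod 2)) :
    (LQ V * F * LQ W).toBlocks₁₁ = V * F.toBlocks₁₁ * W := by
  rw [← fromBlocks_toBlocks F, LQ, LQ, fromBlocks_multiply, fromBlocks_multiply]
  simp

theorem exists_eq_TR_of_toCols₁_eq_one {X : Matrix (Fin n ⊕ Fin n) (Fin n ⊕ Fin n) (ZMod 2)}
    (hX : X ∈ symplecticGroup (Fin n) (ZMod 2)) (hcol : X.toCols₁ = fromRows 1 0) :
    ∃ R, R.IsSymm ∧ X = TR R := by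
  rw [← fromBlocks_toBlocks X, toCols₁_fromBlocks] at hcol
  obtain ⟨h₁₁, h₂₁⟩ := fromRows_inj hcol
  rw [← fromBlocks_toBlocks X, h₁₁, h₂₁, SymplecticGroup.fromBlocks_mem_iff] at hX
  obtain ⟨-, hsymm, hdiag⟩ := hX
  simp only [transpose_one, Matrix.one_mul, transpose_zero, Matrix.zero_mul, sub_zero] at hdiag
  simp only [hdiag, transpose_one, Matrix.mul_one, Matrix.one_mul] at hsymm
  refine ⟨X.toBlocks₁₂, hsymm, ?_⟩
  conv_lhs => rw [← fromBlocks_toBlocks X, h₁₁, h₂₁, hdiag]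
  rfl

theorem exists_eq_mul_TR_of_toCols₁_eq {P F : Matrix (Fin n ⊕ Fin n) (Fin n ⊕ Fin n) (ZMod 2)}
    (hP : P ∈ symplecticGroup (Fin n) (ZMod 2)) (hF : F ∈ symplecticGroup (Fin n) (ZMod 2))
    (hcol : F.toCols₁ = P.toCols₁) : ∃ R, R.IsSymm ∧ F = P * TR R := by
  have hPdet := SymplecticGroup.symplectic_det hP
  have hPinv : P⁻¹ ∈ symplecticGroup (Fin n) (ZMod 2) :=
    SymplecticGroup.coe_inv' ⟨P, hP⟩ ▸ (⟨P, hP⟩⁻¹ : symplecticGroup _ _).2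
  have hXcol : (P⁻¹ * F).toCols₁ = fromRows 1 0 := by
    rw [toCols₁_mul, hcol, ← toCols₁_mul, nonsing_inv_mul _ hPdet, ← fromBlocks_one,
      toCols₁_fromBlocks]
  obtain ⟨R, hR, hX⟩ := exists_eq_TR_of_toCols₁_eq_one (mul_mem hPinv hF) hXcol
  exact ⟨R, hR, by rw [← hX, mul_nonsing_inv_cancel_left _ _ hPdet]⟩

theorem exists_decomposition_of_toBlocks₁₁_eq_Uk {k : ℕ}
    {F : Matrix (Fin n ⊕ Fin n) (Fin n ⊕ Fin n) (ZMod 2)}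
    (hF : F ∈ symplecticGroup (Fin n) (ZMod 2)) (hA : F.toBlocks₁₁ = Uk n k) :
    ∃ T R₁ R₂ : Matrix (Fin n) (Fin n) (ZMod 2), IsUnit T ∧ R₁.IsSymm ∧ R₂.IsSymm ∧
      F = OmegaMat n * TR R₁ * Gk n k * TR R₂ * LQ T := by
  set M := F.toBlocks₂₁
  have hUM : Uk n k * M = Mᵀ * Uk n k := by
    simpa only [hA, Uk_transpose] using SymplecticGroup.transpose_toBlocks₁₁_mul_toBlocks₂₁ hF
  obtain ⟨T, hT, hUT, hMT⟩ := exists_isUnit_eq_add_mul_mul_mul (Uk_add_Lnk n k) (Uk_mul_Lnk n k)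
    (Lnk_mul_Uk n k) hUM
    fun v hU hM => SymplecticGroup.eq_zero_of_toBlocks₁₁_mulVec_eq_zero hF (hA ▸ hU) hM
  have hR₁ : (Uk n k * M).IsSymm := by rw [IsSymm, transpose_mul, Uk_transpose, hUM]
  set P := OmegaMat n * TR (Uk n k * M) * Gk n k * LQ T
  have hP : P ∈ symplecticGroup (Fin n) (ZMod 2) :=
    mul_mem (mul_mem (mul_mem OmegaMat_mem_symplecticGroup (TR_mem_symplecticGroup hR₁))
      (Gk_mem_symplecticGroup k)) (LQ_mem_symplecticGroup hT)
  have hcol : F.toCols₁ = P.toCols₁ := by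
    rw [toCols₁_mul, LQ, toCols₁_fromBlocks, OmegaMat, TR, Gk, fromBlocks_multiply,
      fromBlocks_multiply, fromBlocks_mul_fromRows]
    conv_lhs => rw [← fromBlocks_toBlocks F, toCols₁_fromBlocks, hA]
    simp only [mul_one, mul_zero, add_zero, zero_mul, zero_add, one_mul]
    rw [hUT, ← hMT]
  obtain ⟨X, hX, hFX⟩ := exists_eq_mul_TR_of_toCols₁_eq hP hF hcol
  refine ⟨T, Uk n k * M, T * X * Tᵀ, hT, hR₁, ?_, ?_⟩
  · rw [IsSymm, transpose_mul, transpose_mul, transpose_transpose, hX.eq, Matrix.mul_assoc]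
  · rw [hFX, Matrix.mul_assoc, LQ_mul_TR hT, ← Matrix.mul_assoc]

end Binary

/-- Every binary symplectic matrix decomposes as `L_{Q₁} Ω T_{R₁} G_k T_{R₂} L_{Q₂}`
with `Q₁, Q₂` invertible and `R₁, R₂` symmetric. -/
theorem symplectic_decomposition (n : ℕ)
    (F : Matrix (Fin n ⊕ Fin n) (Fin n ⊕ Fin n) (ZMod 2))
    (hF : F * OmegaMat n * Fᵀ = OmegaMat n) :
    ∃ (k : ℕ) (Q₁ Q₂ R₁ R₂ : Matrix (Fin n) (Fin n) (ZMod 2)),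
      k ≤ n ∧ IsUnit Q₁ ∧ IsUnit Q₂ ∧ R₁.IsSymm ∧ R₂.IsSymm ∧
      F = LQ Q₁ * OmegaMat n * TR R₁ * Gk n k * TR R₂ * LQ Q₂ := by
  obtain ⟨k, hk, V, W, hV, hW, hVAW⟩ := exists_rank_normal_form_diagonal F.toBlocks₁₁
  have hF' : LQ V * F * LQ W ∈ symplecticGroup (Fin n) (ZMod 2) :=
    mul_mem (mul_mem (LQ_mem_symplecticGroup hV) (mem_symplecticGroup_iff.mpr hF))
      (LQ_mem_symplecticGroup hW)
  obtain ⟨T, R₁, R₂, hT, hR₁, hR₂, hdecomp⟩ :=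
    exists_decomposition_of_toBlocks₁₁_eq_Uk hF' ((toBlocks₁₁_LQ_mul_mul_LQ V W F).trans hVAW)
  have hVinv : LQ V⁻¹ * LQ V = 1 := by
    rw [LQ_mul_LQ, nonsing_inv_mul _ ((isUnit_iff_isUnit_det V).mp hV), LQ_one]
  have hWinv : LQ W * LQ W⁻¹ = 1 := by
    rw [LQ_mul_LQ, mul_nonsing_inv _ ((isUnit_iff_isUnit_det W).mp hW), LQ_one]
  refine ⟨k, V⁻¹, T * W⁻¹, R₁, R₂, hk, isUnit_nonsing_inv_iff.mpr hV,
    hT.mul (isUnit_nonsing_inv_iff.mpr hW), hR₁, hR₂, ?_⟩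
  calc F = LQ V⁻¹ * (LQ V * F * LQ W) * LQ W⁻¹ := by
        rw [← Matrix.mul_assoc, ← Matrix.mul_assoc, hVinv, Matrix.one_mul, Matrix.mul_assoc,
          hWinv, Matrix.mul_one]
    _ = LQ V⁻¹ * OmegaMat n * TR R₁ * Gk n k * TR R₂ * LQ (T * W⁻¹) := by
        rw [hdecomp, ← LQ_mul_LQ]
        simp only [Matrix.mul_assoc]
end
end

section
/- Fix n ≥ 1 and ℓ ≥ 1, and let R₁, R₂ ∈ ℤ^{n×n} be symmetric. Then: (i) τ_{R₁}^{(ℓ)} · τ_{R₂}^{(ℓ)} = τ_{R₁+R₂}^{(ℓ)}; and (ii) τ_{R₁}^{(ℓ)} = τ_{R₂}^{(ℓ)} if and only if every diagonal entry of R₁ is congruent to the corresponding diagonal entry of R₂ modulo 2^ℓ and every off-diagonal entry of R₁ is congruent to the corresponding off-diagonal entry of R₂ modulo 2^{ℓ−1}. Consequently, the map R ↦ τ_R^{(ℓ)} is an isomorphism from the additive group of symmetric n × n matrices with diagonal entries in ℤ_{2^ℓ} and off-diagonal entries in ℤ_{2^{ℓ−1}} onto the multiplicative group of all n-qubit QFD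 gates of level ℓ. -/
/-!
The exponent of `τ_R` at `v` is the quadratic form `vᵀ R v` and `ξ_ℓ` is a primitive `2^ℓ`-th
root of unity, so `τ_R` is additive in `R`, and `τ_{R₁} = τ_{R₂}` iff `2^ℓ` divides
`vᵀ D v` for `D = R₂ - R₁` and every 0/1 vector `v`. Testing `v = e_i` and `v = e_i + e_j`
gives `2^ℓ ∣ D_ii` and `2^ℓ ∣ 2 D_ij`. Conversely, such a symmetric `D` is `F + Fᵀ` with `F`
its strict upper triangle plus half its diagonal, all entries divisible by `2^(ℓ-1)`, and
`uᵀ (F + Fᵀ) u = 2 uᵀ F u`. Reducing each entry modulo its modulus gives the unique normal form.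
-/

open Matrix

noncomputable section

/-- `ξ_ℓ = e^{2πi/2^ℓ}`. -/
def xi (ℓ : ℕ) : ℂ := Complex.exp (2 * (Real.pi : ℂ) * Complex.I / (2 ^ ℓ))

/-- The 0/1 integer representative of a binary vector. -/
def intVec {n : ℕ} (v : Fin n → ZMod 2) : Fin n → ℤ := fun i => ((v i).val : ℤ)

/-- The quadratic form diagonal (QFD) gate `τ_R^{(ℓ)}` with `(v,v)` entry `ξ_ℓ^{v R vᵀ}`. -/
def tauR {n : ℕ} (ℓ : ℕ) (R : Matrix (Fin n) (Fin n) ℤ) :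
    Matrix (Fin n → ZMod 2) (Fin n → ZMod 2) ℂ :=
  Matrix.diagonal fun v => xi ℓ ^ (∑ i, intVec v i * Matrix.mulVec R (intVec v) i)

theorem Int.ModEq.eq_of_lt_of_lt {m a b : ℤ} (h : a ≡ b [ZMOD m]) (ha₀ : 0 ≤ a) (ha : a < m)
    (hb₀ : 0 ≤ b) (hb : b < m) : a = b := by
  rwa [Int.ModEq, Int.emod_eq_of_lt ha₀ ha, Int.emod_eq_of_lt hb₀ hb] at h

section QuadraticForm

variable {ι α : Type*}

theorem exists_eq_add_transpose_of_dvd [LinearOrder ι] {m : ℤ} {D : Matrix ι ι ℤ}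
    (hD : D.IsSymm) (hdiag : ∀ i, 2 * m ∣ D i i) (hoff : ∀ i j, i ≠ j → m ∣ D i j) :
    ∃ F : Matrix ι ι ℤ, D = F + Fᵀ ∧ ∀ i j, m ∣ F i j := by
  refine ⟨of fun i j => if i < j then D i j else if i = j then D i i / 2 else 0, ?_, ?_⟩
  · ext i j
    rcases lt_trichotomy i j with h | rfl | h
    · simp [h, h.not_gt, h.ne']
    · have : 2 ∣ D i i := (dvd_mul_right 2 m).trans (hdiag i)
      simp only [Matrix.add_apply, transpose_apply, of_apply, lt_irrefl, if_false, if_true]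
      omega
    · simp [h, h.not_gt, h.ne', hD.apply i j]
  · intro i j
    simp only [of_apply]
    split_ifs with h h'
    · exact hoff i j h.ne
    · subst h'
      obtain ⟨k, hk⟩ := hdiag i
      rw [hk, mul_assoc, Int.mul_ediv_cancel_left _ two_ne_zero]
      exact dvd_mul_right m k
    · exact dvd_zero m

variable [Fintype ι]

theorem dotProduct_mulVec_dvd [CommSemiring α] {m : α} {F : Matrix ι ι α}
    (hF : ∀ i j, m ∣ F i j) (u v : ι → α) : m ∣ u ⬝ᵥ F *ᵥ v :=
  Finset.dvd_sum fun i _ => dvd_mul_of_dvd_right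
    (Finset.dvd_sum fun j _ => dvd_mul_of_dvd_left (hF i j) _) _

theorem dotProduct_add_transpose_mulVec [CommSemiring α] (F : Matrix ι ι α) (u : ι → α) :
    u ⬝ᵥ (F + Fᵀ) *ᵥ u = 2 * (u ⬝ᵥ F *ᵥ u) := by
  rw [add_mulVec, dotProduct_add, mulVec_transpose, dotProduct_comm u (u ᵥ* F),
    ← dotProduct_mulVec, two_mul]

theorem two_mul_dvd_dotProduct_mulVec [LinearOrder ι] {m : ℤ} {D : Matrix ι ι ℤ}
    (hD : D.IsSymm) (hdiag : ∀ i, 2 * m ∣ D i i) (hoff : ∀ i j, i ≠ j → m ∣ D i j)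
    (u : ι → ℤ) : 2 * m ∣ u ⬝ᵥ D *ᵥ u := by
  obtain ⟨F, rfl, hF⟩ := exists_eq_add_transpose_of_dvd hD hdiag hoff
  rw [dotProduct_add_transpose_mulVec]
  exact mul_dvd_mul_left 2 (dotProduct_mulVec_dvd hF u u)

theorem single_add_single_dotProduct_mulVec [CommSemiring α] [DecidableEq ι]
    (D : Matrix ι ι α) (i j : ι) :
    (Pi.single i 1 + Pi.single j 1) ⬝ᵥ D *ᵥ (Pi.single i 1 + Pi.single j 1) =
      D i i + D i j + D j i + D j j := by
  simp only [mulVec_add, mulVec_single, MulOpposite.op_one, one_smul, dotProduct_add,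
    add_dotProduct, single_dotProduct, col_apply, one_mul]
  ring

end QuadraticForm

variable {n : ℕ}

theorem intVec_single (i : Fin n) : intVec (Pi.single i 1) = Pi.single i 1 := by
  funext k
  simp only [intVec, Pi.single_apply]
  split_ifs <;> rfl

theorem intVec_single_add_single {i j : Fin n} (hij : i ≠ j) :
    intVec (Pi.single i 1 + Pi.single j 1) = Pi.single i 1 + Pi.single j 1 := by
  funext k
  simp only [intVec, Pi.add_apply, Pi.single_apply]
  split_ifs with hi hj <;> first | rfl | exact absurd (hi.symm.trans hj) hij

theorem dvd_entries_of_forall_dvd_dotProduct_mulVec {m : ℤ} {D : Matrix (Fin n) (Fin n) ℤ}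
    (hD : D.IsSymm) (h : ∀ v : Fin n → ZMod 2, 2 * m ∣ intVec v ⬝ᵥ D *ᵥ intVec v) :
    (∀ i, 2 * m ∣ D i i) ∧ ∀ i j, i ≠ j → m ∣ D i j := by
  have hdiag (i : Fin n) : 2 * m ∣ D i i := by
    simpa [intVec_single] using h (Pi.single i 1)
  refine ⟨hdiag, fun i j hij => ?_⟩
  have hpair := h (Pi.single i 1 + Pi.single j 1)
  rw [intVec_single_add_single hij, single_add_single_dotProduct_mulVec, hD.apply i j] at hpair
  have htwice : 2 * m ∣ 2 * D i j := by
    have := dvd_sub (dvd_sub hpair (hdiag i)) (hdiag j)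
    rwa [show D i i + D i j + D i j + D j j - D i i - D j j = 2 * D i j by ring] at this
  exact (mul_dvd_mul_iff_left two_ne_zero).mp htwice

theorem forall_dvd_dotProduct_mulVec_iff {m : ℤ} {D : Matrix (Fin n) (Fin n) ℤ}
    (hD : D.IsSymm) :
    (∀ v : Fin n → ZMod 2, 2 * m ∣ intVec v ⬝ᵥ D *ᵥ intVec v) ↔
      (∀ i, 2 * m ∣ D i i) ∧ ∀ i j, i ≠ j → m ∣ D i j :=
  ⟨dvd_entries_of_forall_dvd_dotProduct_mulVec hD,
    fun ⟨hdiag, hoff⟩ _ => two_mul_dvd_dotProduct_mulVec hD hdiag hoff _⟩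

theorem xi_ne_zero (ℓ : ℕ) : xi ℓ ≠ 0 :=
  Complex.exp_ne_zero _

theorem xi_isPrimitiveRoot (ℓ : ℕ) : IsPrimitiveRoot (xi ℓ) (2 ^ ℓ) := by
  simpa [xi] using Complex.isPrimitiveRoot_exp (2 ^ ℓ) (by positivity)

theorem xi_zpow_eq_xi_zpow_iff (ℓ : ℕ) {a b : ℤ} : xi ℓ ^ a = xi ℓ ^ b ↔ a ≡ b [ZMOD 2 ^ ℓ] := by
  rw [eq_comm, ← div_eq_one_iff_eq (zpow_ne_zero a (xi_ne_zero ℓ)), ← zpow_sub₀ (xi_ne_zero ℓ),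
    (xi_isPrimitiveRoot ℓ).zpow_eq_one_iff_dvd, Int.modEq_iff_dvd]
  push_cast
  rfl

theorem tauR_eq_diagonal (ℓ : ℕ) (R : Matrix (Fin n) (Fin n) ℤ) :
    tauR ℓ R = diagonal fun v => xi ℓ ^ (intVec v ⬝ᵥ R *ᵥ intVec v) :=
  rfl

theorem tauR_mul_tauR (ℓ : ℕ) (R₁ R₂ : Matrix (Fin n) (Fin n) ℤ) :
    tauR ℓ R₁ * tauR ℓ R₂ = tauR ℓ (R₁ + R₂) := by
  simp only [tauR_eq_diagonal, diagonal_mul_diagonal, add_mulVec, dotProduct_add,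
    ← zpow_add₀ (xi_ne_zero ℓ)]

theorem tauR_eq_tauR_iff_dvd (ℓ : ℕ) (R₁ R₂ : Matrix (Fin n) (Fin n) ℤ) :
    tauR ℓ R₁ = tauR ℓ R₂ ↔ ∀ v, 2 ^ ℓ ∣ intVec v ⬝ᵥ (R₂ - R₁) *ᵥ intVec v := by
  simp only [tauR_eq_diagonal, diagonal_eq_diagonal_iff, xi_zpow_eq_xi_zpow_iff,
    Int.modEq_iff_dvd, sub_mulVec, dotProduct_sub]

theorem tauR_eq_tauR_iff {ℓ : ℕ} (hℓ : 1 ≤ ℓ) {R₁ R₂ : Matrix (Fin n) (Fin n) ℤ}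
    (h₁ : R₁.IsSymm) (h₂ : R₂.IsSymm) :
    tauR ℓ R₁ = tauR ℓ R₂ ↔
      (∀ i, R₁ i i ≡ R₂ i i [ZMOD 2 ^ ℓ]) ∧ ∀ i j, i ≠ j → R₁ i j ≡ R₂ i j [ZMOD 2 ^ (ℓ - 1)] := by
  have hpow : (2 : ℤ) ^ ℓ = 2 * 2 ^ (ℓ - 1) := by rw [← pow_succ', Nat.sub_add_cancel hℓ]
  simp only [tauR_eq_tauR_iff_dvd, hpow, forall_dvd_dotProduct_mulVec_iff (h₂.sub h₁),
    Matrix.sub_apply, Int.modEq_iff_dvd]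

def IsQFDReduced (ℓ : ℕ) (R : Matrix (Fin n) (Fin n) ℤ) : Prop :=
  (∀ i, 0 ≤ R i i ∧ R i i < 2 ^ ℓ) ∧ ∀ i j, i ≠ j → 0 ≤ R i j ∧ R i j < 2 ^ (ℓ - 1)

def qfdNormalForm (ℓ : ℕ) (R : Matrix (Fin n) (Fin n) ℤ) : Matrix (Fin n) (Fin n) ℤ :=
  of fun i j => if i = j then R i i % 2 ^ ℓ else R i j % 2 ^ (ℓ - 1)

theorem qfdNormalForm_isSymm {ℓ : ℕ} {R : Matrix (Fin n) (Fin n) ℤ} (hR : R.IsSymm) :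
    (qfdNormalForm ℓ R).IsSymm := by
  refine IsSymm.ext fun i j => ?_
  by_cases h : i = j
  · subst h; rfl
  · simp [qfdNormalForm, h, Ne.symm h, hR.apply i j]

theorem isQFDReduced_qfdNormalForm (ℓ : ℕ) (R : Matrix (Fin n) (Fin n) ℤ) :
    IsQFDReduced ℓ (qfdNormalForm ℓ R) := by
  have hmod (a : ℤ) (k : ℕ) : 0 ≤ a % 2 ^ k ∧ a % 2 ^ k < 2 ^ k :=
    ⟨Int.emod_nonneg _ (by positivity), Int.emod_lt_of_pos _ (by positivity)⟩
  exact ⟨fun i => by simpa [qfdNormalForm] using hmod (R i i) ℓ,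
    fun i j hij => by simpa [qfdNormalForm, hij] using hmod (R i j) (ℓ - 1)⟩

theorem tauR_qfdNormalForm {ℓ : ℕ} (hℓ : 1 ≤ ℓ) {R : Matrix (Fin n) (Fin n) ℤ}
    (hR : R.IsSymm) : tauR ℓ (qfdNormalForm ℓ R) = tauR ℓ R := by
  refine (tauR_eq_tauR_iff hℓ (qfdNormalForm_isSymm hR) hR).mpr
    ⟨fun i => ?_, fun i j hij => ?_⟩
  · simpa [qfdNormalForm] using Int.mod_modEq _ _
  · simpa [qfdNormalForm, hij] using Int.mod_modEq _ _

theorem eq_of_tauR_eq_of_isQFDReduced {ℓ : ℕ} (hℓ : 1 ≤ ℓ) {R₁ R₂ : Matrix (Fin n) (Fin n) ℤ}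
    (h₁ : R₁.IsSymm) (h₂ : R₂.IsSymm) (hr₁ : IsQFDReduced ℓ R₁) (hr₂ : IsQFDReduced ℓ R₂)
    (h : tauR ℓ R₁ = tauR ℓ R₂) : R₁ = R₂ := by
  obtain ⟨hdiag, hoff⟩ := (tauR_eq_tauR_iff hℓ h₁ h₂).mp h
  ext i j
  by_cases hij : i = j
  · subst hij
    exact (hdiag i).eq_of_lt_of_lt (hr₁.1 i).1 (hr₁.1 i).2 (hr₂.1 i).1 (hr₂.1 i).2
  · exact (hoff i j hij).eq_of_lt_of_lt (hr₁.2 i j hij).1 (hr₁.2 i j hij).2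
      (hr₂.2 i j hij).1 (hr₂.2 i j hij).2

theorem qfd_isomorphism_general (n ℓ : ℕ) (hℓ : 1 ≤ ℓ) :
    (∀ R₁ R₂ : Matrix (Fin n) (Fin n) ℤ, R₁.IsSymm → R₂.IsSymm →
      tauR ℓ R₁ * tauR ℓ R₂ = tauR ℓ (R₁ + R₂)) ∧
    (∀ R₁ R₂ : Matrix (Fin n) (Fin n) ℤ, R₁.IsSymm → R₂.IsSymm →
      (tauR ℓ R₁ = tauR ℓ R₂ ↔
        (∀ i, Int.ModEq (2 ^ ℓ) (R₁ i i) (R₂ i i)) ∧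
        (∀ i j, i ≠ j → Int.ModEq (2 ^ (ℓ - 1)) (R₁ i j) (R₂ i j)))) ∧
    (∀ M : Matrix (Fin n → ZMod 2) (Fin n → ZMod 2) ℂ,
      (∃ R : Matrix (Fin n) (Fin n) ℤ, R.IsSymm ∧ M = tauR ℓ R) →
      ∃! R : Matrix (Fin n) (Fin n) ℤ,
        R.IsSymm ∧ (∀ i, 0 ≤ R i i ∧ R i i < 2 ^ ℓ) ∧
        (∀ i j, i ≠ j → 0 ≤ R i j ∧ R i j < 2 ^ (ℓ - 1)) ∧ M = tauR ℓ R) := by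
  refine ⟨fun R₁ R₂ _ _ => tauR_mul_tauR ℓ R₁ R₂, fun R₁ R₂ => tauR_eq_tauR_iff hℓ, ?_⟩
  rintro M ⟨R, hR, rfl⟩
  have hsymm := qfdNormalForm_isSymm (ℓ := ℓ) hR
  have hred := isQFDReduced_qfdNormalForm ℓ R
  have htau := tauR_qfdNormalForm hℓ hR
  refine ⟨qfdNormalForm ℓ R, ⟨hsymm, hred.1, hred.2, htau.symm⟩, ?_⟩
  rintro R' ⟨hR', hdiag', hoff', hτ⟩
  exact eq_of_tauR_eq_of_isQFDReduced hℓ hR' hsymm ⟨hdiag', hoff'⟩ hred (hτ.symm.trans htau.symm)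

/-- (i) QFD gates multiply by adding their symmetric matrices; (ii) two QFD gates of
level `ℓ` coincide iff their matrices agree on the diagonal mod `2^ℓ` and off the
diagonal mod `2^{ℓ−1}`; consequently (iii) each QFD gate has a unique symmetric
representative with diagonal entries in `[0, 2^ℓ)` and off-diagonal entries in
`[0, 2^{ℓ−1})`, so `R ↦ τ_R^{(ℓ)}` is an isomorphism from the additive group of such
matrices onto the multiplicative group of level-`ℓ` QFD gates. -/
theorem qfd_isomorphism (n ℓ : ℕ) (hn : 1 ≤ n) (hℓ : 1 ≤ ℓ) :
    (∀ R₁ R₂ : Matrix (Fin n) (Fin n) ℤ, R₁.IsSymm → R₂.IsSymm →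
      tauR ℓ R₁ * tauR ℓ R₂ = tauR ℓ (R₁ + R₂)) ∧
    (∀ R₁ R₂ : Matrix (Fin n) (Fin n) ℤ, R₁.IsSymm → R₂.IsSymm →
      (tauR ℓ R₁ = tauR ℓ R₂ ↔
        (∀ i, Int.ModEq (2 ^ ℓ) (R₁ i i) (R₂ i i)) ∧
        (∀ i j, i ≠ j → Int.ModEq (2 ^ (ℓ - 1)) (R₁ i j) (R₂ i j)))) ∧
    (∀ M : Matrix (Fin n → ZMod 2) (Fin n → ZMod 2) ℂ,
      (∃ R : Matrix (Fin n) (Fin n) ℤ, R.IsSymm ∧ M = tauR ℓ R) →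
      ∃! R : Matrix (Fin n) (Fin n) ℤ,
        R.IsSymm ∧ (∀ i, 0 ≤ R i i ∧ R i i < 2 ^ ℓ) ∧
        (∀ i j, i ≠ j → 0 ≤ R i j ∧ R i j < 2 ^ (ℓ - 1)) ∧ M = tauR ℓ R) :=
  qfd_isomorphism_general n ℓ hℓ

end
end

section
/- Let n ≥ 1 and N = 2^n. Let t₁, t₇ ∈ F₂ⁿ have disjoint supports (t₁ ∗ t₇ = 0), set t = t₁ + 7t₇ ∈ {0,1,7}ⁿ and t′ = t₁ + t₇ ∈ F₂ⁿ, and let T^{⊗t} be the N × N diagonal matrix with (v,v) entry e^{iπ(v·t)/4} (i.e. T is applied on supp(t₁) and T† = T⁷ on supp(t₇)). Then for all a, b ∈ F₂ⁿ: T^{⊗t} E(a,b) (T^{⊗t})† = 2^{−w_H(a ∗ t′)/2} · Σ_{y ⪯ a ∗ t′} (−1)^{(b + t₇)·y} E(a, b ⊕ y), where the sum runs over all y ∈ F₂ⁿ with supp(y) ⊆ supp(a ∗ t′). -/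
/-!
All three matrices are tensor products over the qubits: `T^{⊗t} = ⊗ᵢ T^{tᵢ}` and
`E(a,b) = ⊗ᵢ E(aᵢ,bᵢ)`, the phase `i^{(a·b mod 4)}` splitting because `i⁴ = 1`. Conjugation
therefore acts qubit by qubit, where it is a `2 × 2` computation with `ω = e^{iπ/4} = (1+i)/√2`
and `ω⁷ = ω̄`: it fixes `E(0,b)`, while `T E(1,b) T† = (E(1,b) + (-1)^b E(1,b+1))/√2` and
`T† E(1,b) T = (E(1,b) - (-1)^b E(1,b+1))/√2`. Multiplying out the tensor product of these sums
gives the sum over `y ⪯ a ∗ t′`.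
-/

open Matrix

noncomputable section

/-- The Hermitian Pauli matrix `E(a,b)` on `n` qubits. -/
def PauliE {n : ℕ} (a b : Fin n → ZMod 2) :
    Matrix (Fin n → ZMod 2) (Fin n → ZMod 2) ℂ :=
  Matrix.of fun u v =>
    Complex.I ^ ((∑ i, (a i).val * (b i).val) % 4) *
      (-1 : ℂ) ^ (∑ i, (v i).val * (b i).val) *
      (if u = v + a then (1 : ℂ) else 0)

/-- Hamming weight of a binary vector. -/
def wHam {n : ℕ} (a : Fin n → ZMod 2) : ℕ := ∑ i, (a i).val

/-- `T^{⊗t}` for an integer vector `t`: the diagonal matrix with `(v,v)` entry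
`e^{iπ (v·t)/4}`. -/
def transTvec {n : ℕ} (t : Fin n → ℤ) : Matrix (Fin n → ZMod 2) (Fin n → ZMod 2) ℂ :=
  Matrix.diagonal fun v =>
    Complex.exp ((Real.pi : ℂ) * Complex.I / 4) ^ (∑ i, ((v i).val : ℤ) * t i)

open Finset

theorem zpow_sum₀ {ι G₀ : Type*} [CommGroupWithZero G₀] {x : G₀} (hx : x ≠ 0) (s : Finset ι)
    (f : ι → ℤ) : x ^ (∑ i ∈ s, f i) = ∏ i ∈ s, x ^ f i := by
  classical
  induction s using Finset.induction_on with
  | empty => simp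
  | insert i s hi ih => rw [sum_insert hi, prod_insert hi, zpow_add₀ hx, ih]

namespace Matrix

section PiKronecker

variable {ι R : Type*} [Fintype ι] [CommSemiring R] {m n p : ι → Type*}

def piKronecker (A : ∀ i, Matrix (m i) (n i) R) : Matrix (∀ i, m i) (∀ i, n i) R :=
  of fun u v => ∏ i, A i (u i) (v i)

theorem piKronecker_apply (A : ∀ i, Matrix (m i) (n i) R) (u : ∀ i, m i) (v : ∀ i, n i) :
    piKronecker A u v = ∏ i, A i (u i) (v i) := rfl

theorem piKronecker_mul [DecidableEq ι] [∀ i, Fintype (n i)] (A : ∀ i, Matrix (m i) (n i) R)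
    (B : ∀ i, Matrix (n i) (p i) R) :
    piKronecker A * piKronecker B = piKronecker fun i => A i * B i := by
  ext u w
  simp only [mul_apply, piKronecker_apply, Fintype.prod_sum, prod_mul_distrib]

theorem piKronecker_conjTranspose [StarRing R] (A : ∀ i, Matrix (m i) (n i) R) :
    (piKronecker A)ᴴ = piKronecker fun i => (A i)ᴴ := by
  ext u v
  simp [piKronecker_apply, star_prod]

theorem piKronecker_smul (c : ι → R) (A : ∀ i, Matrix (m i) (n i) R) :
    piKronecker (fun i => c i • A i) = (∏ i, c i) • piKronecker A := by
  ext u v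
  simp [piKronecker_apply, prod_mul_distrib]

theorem piKronecker_sum [DecidableEq ι] {κ : ι → Type*} (s : ∀ i, Finset (κ i))
    (A : ∀ i, κ i → Matrix (m i) (n i) R) :
    piKronecker (fun i => ∑ c ∈ s i, A i c) =
      ∑ y ∈ Fintype.piFinset s, piKronecker fun i => A i (y i) := by
  ext u v
  simp [piKronecker_apply, Matrix.sum_apply, prod_univ_sum]

theorem piKronecker_diagonal [∀ i, DecidableEq (m i)] (d : ∀ i, m i → R) :
    piKronecker (fun i => diagonal (d i)) = diagonal fun u => ∏ i, d i (u i) := by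
  ext u v
  by_cases huv : u = v
  · subst huv
    simp [piKronecker_apply]
  · obtain ⟨i, hi⟩ := Function.ne_iff.mp huv
    rw [piKronecker_apply, diagonal_apply_ne _ huv]
    exact prod_eq_zero (mem_univ i) (diagonal_apply_ne _ hi)

end PiKronecker

end Matrix

open Complex ComplexConjugate

local notation "ω" => Complex.exp ((Real.pi : ℂ) * Complex.I / 4)

theorem exp_pi_mul_I_div_four : ω = (1 + I) / (Real.sqrt 2 : ℂ) := by
  have hsqrt : (Real.sqrt 2 : ℂ) ≠ 0 := by simp
  rw [eq_div_iff hsqrt, show (Real.pi : ℂ) * I / 4 = (Real.pi / 4 : ℝ) * I by push_cast; ring,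
    exp_mul_I, ← ofReal_cos, ← ofReal_sin, Real.cos_pi_div_four, Real.sin_pi_div_four]
  push_cast
  linear_combination (1 + I) / 2 * (by norm_cast; simp : (Real.sqrt 2 : ℂ) ^ 2 = 2)

theorem conj_exp_pi_mul_I_div_four : conj ω = (1 - I) / (Real.sqrt 2 : ℂ) := by
  rw [exp_pi_mul_I_div_four]
  simp [conj_ofReal, sub_eq_add_neg]

theorem exp_pi_mul_I_div_four_mul_conj : ω * conj ω = 1 := by
  have hsqrt : (Real.sqrt 2 : ℂ) ^ 2 = 2 := by norm_cast; simp
  rw [conj_exp_pi_mul_I_div_four, exp_pi_mul_I_div_four]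
  field_simp
  linear_combination -I_sq - hsqrt

theorem exp_pi_mul_I_div_four_pow_seven : ω ^ 7 = conj ω := by
  have h8 : ω ^ 8 = 1 := by
    rw [← exp_nat_mul, show ((8 : ℕ) : ℂ) * (Real.pi * I / 4) = 2 * Real.pi * I by push_cast; ring,
      exp_two_pi_mul_I]
  calc ω ^ 7 = ω ^ 7 * (ω * conj ω) := by rw [exp_pi_mul_I_div_four_mul_conj, mul_one]
    _ = ω ^ 8 * conj ω := by ring
    _ = conj ω := by rw [h8, one_mul]

theorem conj_exp_pi_mul_I_div_four_pow_seven : conj ω ^ 7 = ω := by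
  rw [← map_pow, exp_pi_mul_I_div_four_pow_seven, conj_conj]

def pauli (a b : ZMod 2) : Matrix (ZMod 2) (ZMod 2) ℂ :=
  of fun u v => I ^ (a.val * b.val) * (-1 : ℂ) ^ (v.val * b.val) * if u = v + a then 1 else 0

def tGate (τ : ℤ) : Matrix (ZMod 2) (ZMod 2) ℂ :=
  diagonal fun x => ω ^ ((x.val : ℤ) * τ)

theorem PauliE_eq_piKronecker {n : ℕ} (a b : Fin n → ZMod 2) :
    PauliE a b = piKronecker fun i => pauli (a i) (b i) := by
  ext u v
  simp only [PauliE, pauli, piKronecker_apply, of_apply, prod_mul_distrib, prod_pow_eq_pow_sum,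
    ← I_pow_eq_pow_mod, prod_boole, mem_univ, true_implies, funext_iff, Pi.add_apply]

theorem transTvec_eq_piKronecker {n : ℕ} (t : Fin n → ℤ) :
    transTvec t = piKronecker fun i => tGate (t i) := by
  simp only [transTvec, tGate, piKronecker_diagonal, zpow_sum₀ (exp_ne_zero _)]

theorem tGate_mul_mul_conjTranspose_apply (τ : ℤ) (M : Matrix (ZMod 2) (ZMod 2) ℂ)
    (u v : ZMod 2) :
    (tGate τ * M * (tGate τ)ᴴ) u v = ω ^ ((u.val : ℤ) * τ) * M u v * conj ω ^ ((v.val : ℤ) * τ) := by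
  simp [tGate, diagonal_mul, mul_diagonal, star_zpow₀, -ZMod.natCast_val]

theorem tGate_mul_pauli_mul_conjTranspose (t₁ t₇ a b : ZMod 2) (h : t₁ * t₇ = 0) :
    tGate (t₁.val + 7 * t₇.val) * pauli a b * (tGate (t₁.val + 7 * t₇.val))ᴴ =
      ((1 : ℂ) / (Real.sqrt 2 : ℂ)) ^ (a * (t₁ + t₇)).val •
        ∑ c ∈ univ.filter (fun c : ZMod 2 => a * (t₁ + t₇) = 0 → c = 0),
          (-1 : ℂ) ^ ((b.val + t₇.val) * c.val) • pauli a (b + c) := by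
  have hω := exp_pi_mul_I_div_four
  have hω' := conj_exp_pi_mul_I_div_four
  have hcases : ∀ x : ZMod 2, x = 0 ∨ x = 1 := by decide
  have hval : (1 : ZMod 2).val = 1 := rfl
  have htwo : (1 + 1 : ZMod 2) = 0 := rfl
  have hsum : ∀ f : ZMod 2 → ℂ, ∑ x, f x = f 0 + f 1 := Fin.sum_univ_two
  ext u v
  rw [tGate_mul_mul_conjTranspose_apply]
  by_cases huv : u = v + a
  · subst huv
    rcases hcases a with rfl | rfl <;> rcases hcases b with rfl | rfl <;>
      rcases hcases v with rfl | rfl <;> rcases hcases t₁ with rfl | rfl <;>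
      rcases hcases t₇ with rfl | rfl <;>
      simp [pauli, Matrix.sum_apply, hsum, hval, htwo, filter_eq', -ZMod.natCast_val,
        exp_pi_mul_I_div_four_pow_seven, conj_exp_pi_mul_I_div_four_pow_seven] at h ⊢ <;>
      grind [I_sq, exp_pi_mul_I_div_four_mul_conj]
  · simp [pauli, Matrix.sum_apply, huv]

theorem transversal_T_Tdagger_conjugation_general (n : ℕ)
    (t₁ t₇ : Fin n → ZMod 2) (hdisj : t₁ * t₇ = 0) (a b : Fin n → ZMod 2) :
    transTvec (fun i => ((t₁ i).val : ℤ) + 7 * ((t₇ i).val : ℤ)) * PauliE a b *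
        (transTvec (fun i => ((t₁ i).val : ℤ) + 7 * ((t₇ i).val : ℤ)))ᴴ =
      ((1 : ℂ) / (Real.sqrt 2 : ℂ)) ^ wHam (a * (t₁ + t₇)) •
        ∑ y ∈ Finset.univ.filter
            (fun y : Fin n → ZMod 2 => ∀ i, (a * (t₁ + t₇)) i = 0 → y i = 0),
          ((-1 : ℂ) ^ (∑ i, ((b i).val + (t₇ i).val) * (y i).val)) • PauliE a (b + y) := by
  have hsupp : univ.filter (fun y : Fin n → ZMod 2 => ∀ i, (a * (t₁ + t₇)) i = 0 → y i = 0) =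
      Fintype.piFinset fun i => univ.filter fun c => a i * (t₁ i + t₇ i) = 0 → c = 0 := by
    ext y
    simp [Fintype.mem_piFinset]
  rw [transTvec_eq_piKronecker, PauliE_eq_piKronecker, piKronecker_conjTranspose,
    piKronecker_mul, piKronecker_mul]
  simp only [tGate_mul_pauli_mul_conjTranspose _ _ _ _ (congrFun hdisj _)]
  rw [piKronecker_smul, piKronecker_sum, hsupp, wHam, ← prod_pow_eq_pow_sum]
  simp only [piKronecker_smul, ← PauliE_eq_piKronecker, prod_pow_eq_pow_sum]
  rfl

/-- Conjugation of a Pauli matrix by a transversal pattern of `T` (on `supp(t₁)`) and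
`T† = T⁷` (on `supp(t₇)`) gates, with `t = t₁ + 7t₇` and `t′ = t₁ + t₇`:
`T^{⊗t} E(a,b) (T^{⊗t})† = 2^{−w_H(a∗t′)/2} Σ_{y ⪯ a∗t′} (−1)^{(b+t₇)·y} E(a, b ⊕ y)`. -/
theorem transversal_T_Tdagger_conjugation (n : ℕ) (hn : 1 ≤ n)
    (t₁ t₇ : Fin n → ZMod 2) (hdisj : t₁ * t₇ = 0) (a b : Fin n → ZMod 2) :
    transTvec (fun i => ((t₁ i).val : ℤ) + 7 * ((t₇ i).val : ℤ)) * PauliE a b *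
        (transTvec (fun i => ((t₁ i).val : ℤ) + 7 * ((t₇ i).val : ℤ)))ᴴ =
      ((1 : ℂ) / (Real.sqrt 2 : ℂ)) ^ wHam (a * (t₁ + t₇)) •
        ∑ y ∈ Finset.univ.filter
            (fun y : Fin n → ZMod 2 => ∀ i, (a * (t₁ + t₇)) i = 0 → y i = 0),
          ((-1 : ℂ) ^ (∑ i, ((b i).val + (t₇ i).val) * (y i).val)) • PauliE a (b + y) :=
  transversal_T_Tdagger_conjugation_general n t₁ t₇ hdisj a b

end
end
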